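/- Every automorphism f of a finite nonempty tree T with f ∘ f = id either fixes some vertex of T or fixes some edge of T (i.e. there is an edge {u,v} with f(u) = v and f(v) = u, or f(u)=u and f(v)=v). -/
import Mathlib

open SimpleGraph

lemma getVert_map' {V : Type*} {G H : SimpleGraph V} (f : G →g H) {u v : V}
    (p : G.Walk u v) (i : ℕ) : (p.map f).getVert i = f (p.getVert i) := by
  induction p generalizing i with
  | nil => simp [SimpleGraph.Walk.getVert]
  | cons h p ih => cases i <;> simp [SimpleGraph.Walk.getVert, ih]

/-- An automorphism of order dividing 2 of a finite nonempty tree fixes a vertex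
or fixes an edge (either swapping or fixing its two endpoints). -/
theorem stmt5 {V : Type*} [Fintype V] [Nonempty V] (T : SimpleGraph V) (hT : T.IsTree)
    (f : T ≃g T) (hf : ∀ v, f (f v) = v) :
    (∃ v, f v = v) ∨
      ∃ u v, T.Adj u v ∧ ((f u = v ∧ f v = u) ∨ (f u = u ∧ f v = v)) := by
  obtain ⟨v⟩ := ‹Nonempty V›
  obtain ⟨p, hp, hup⟩ := hT.existsUnique_path v (f v)
  set n := p.length with hn
  -- the image walk, reversed, is also a path from v to f v
  have hinj : Function.Injective (f : V → V) := f.toEquiv.injective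
  have hq : (((p.map f.toHom).copy rfl (hf v)).reverse).IsPath :=
    (((Walk.isPath_copy _ rfl (hf v)).2 (Walk.map_isPath_of_injective (f := f.toHom) hinj hp))).reverse
  have hpe : p = ((p.map f.toHom).copy rfl (hf v)).reverse := (hup _ hq).symm
  have key : ∀ i, i ≤ n → f (p.getVert i) = p.getVert (n - i) := by
    intro i hi
    have : p.getVert (n - i) = f (p.getVert i) := by
      conv_lhs => rw [hpe]
      rw [Walk.getVert_reverse, Walk.length_copy, Walk.getVert_copy, Walk.length_map,
        getVert_map']
      rw [show p.length - (n - i) = i from by simp only [hn] at hi; omega]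
      rfl
    exact this.symm
  rcases Nat.even_or_odd n with he | ho
  · left
    refine ⟨p.getVert (n / 2), ?_⟩
    have := key (n / 2) (by omega)
    rwa [show n - n / 2 = n / 2 by rcases he with ⟨k, hk⟩; omega] at this
  · right
    have hlt : n / 2 < n := by
      rcases ho with ⟨k, hk⟩; omega
    refine ⟨p.getVert (n / 2), p.getVert (n / 2 + 1), p.adj_getVert_succ hlt, Or.inl ⟨?_, ?_⟩⟩
    · have := key (n / 2) (by omega)
      rwa [show n - n / 2 = n / 2 + 1 by rcases ho with ⟨k, hk⟩; omega] at this
    · have := key (n / 2 + 1) (by omega)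
      rwa [show n - (n / 2 + 1) = n / 2 by rcases ho with ⟨k, hk⟩; omega] at this
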